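/- Assume (φ1)–(φ3) and (V1)–(V5), and let q be the unique heteroclinic solution of problem (P). Then V is even on (−α,α) (i.e. V(−t) = V(t) for all t ∈ (−α,α)) if and only if q is odd (i.e. q(−t) = −q(t) for all t ∈ ℝ). -/

import Mathlib

open Real Filter Set MeasureTheory

noncomputable def Phi (φ : ℝ → ℝ) (t : ℝ) : ℝ := ∫ s in (0:ℝ)..|t|, s * φ s

def IsClassicalSolution (φ V q : ℝ → ℝ) : Prop :=
  Differentiable ℝ q ∧
  ∀ t : ℝ, HasDerivAt
    (fun s => if deriv q s = 0 then 0 else φ |deriv q s| * deriv q s)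
    (deriv V (q t)) t

def IsHeteroclinic (φ V : ℝ → ℝ) (α : ℝ) (q : ℝ → ℝ) : Prop :=
  IsClassicalSolution φ V q ∧ Differentiable ℝ (deriv q) ∧ Continuous (deriv q) ∧
  q 0 = 0 ∧ Tendsto q atTop (nhds α) ∧ Tendsto q atBot (nhds (-α))

/-!
Along a solution the energy `kineticEnergy φ q' - V q` is constant. If `q` is odd then `q'` is
even, so comparing the energy at `t` and `-t` gives `V (q t) = V (-q t)`, and `q` takes every
value in `(-α, α)`. Conversely, if `V` is even on `(-α, α)` then `t ↦ -q (-t)` is again a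
heteroclinic solution as long as `q` stays in `(-α, α)`, and uniqueness makes it equal to `q`.
That `q` never reaches `±α` is the analytic core: the energy level is then `0`, and near `α` the
growth conditions give `C |q'| ^ r ≤ V q ≤ M (α - q) ^ r`, i.e. `q' ≤ K (α - q)`, so by Grönwall
`q` cannot reach `α` in finite time.
-/

open Topology

-- `Φ'`, with the convention of `IsClassicalSolution` at `0`.
noncomputable def flux (φ : ℝ → ℝ) (x : ℝ) : ℝ := if x = 0 then 0 else φ |x| * x

-- The Legendre transform `s Φ'(s) - Φ(s)`.
noncomputable def kineticEnergy (φ : ℝ → ℝ) (s : ℝ) : ℝ := s * flux φ s - Phi φ s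

section Flux

variable {φ : ℝ → ℝ}

lemma flux_zero : flux φ 0 = 0 := if_pos rfl

lemma flux_of_pos {x : ℝ} (hx : 0 < x) : flux φ x = φ x * x := by
  rw [flux, if_neg hx.ne', abs_of_pos hx]

lemma flux_neg (x : ℝ) : flux φ (-x) = -flux φ x := by
  rcases eq_or_ne x 0 with rfl | hx
  · simp [flux_zero]
  · rw [flux, flux, if_neg (neg_ne_zero.mpr hx), if_neg hx, abs_neg, mul_neg]

lemma Phi_neg (x : ℝ) : Phi φ (-x) = Phi φ x := by rw [Phi, Phi, abs_neg]

lemma Phi_abs (x : ℝ) : Phi φ |x| = Phi φ x := by rw [Phi, Phi, abs_abs]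

lemma Phi_zero : Phi φ 0 = 0 := by
  rw [Phi, abs_zero, intervalIntegral.integral_same]

lemma continuous_flux (hcont : ContinuousOn φ (Ioi 0)) (hpos : ∀ t > 0, 0 < φ t)
    {c δ₀ r : ℝ} (hδ₀ : 0 < δ₀) (hr : 1 < r)
    (hbound : ∀ t, 0 < t → t ≤ δ₀ → φ t * t ≤ c * t ^ (r - 1)) :
    Continuous (flux φ) := by
  refine continuous_iff_continuousAt.2 fun x => ?_
  rcases eq_or_ne x 0 with rfl | hx
  · have hlim : Tendsto (fun y : ℝ => c * |y| ^ (r - 1)) (𝓝 0) (𝓝 0) := by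
      have := ((continuous_rpow_const (by linarith : (0:ℝ) ≤ r - 1)).comp
        continuous_abs).const_mul c |>.tendsto 0
      simpa [zero_rpow (by linarith : r - 1 ≠ 0)] using this
    rw [ContinuousAt, flux_zero]
    refine squeeze_zero_norm' ?_ hlim
    filter_upwards [Metric.ball_mem_nhds (0:ℝ) hδ₀] with y hy
    rw [Metric.mem_ball, dist_zero_right, Real.norm_eq_abs] at hy
    rcases eq_or_ne y 0 with rfl | hy0
    · simp [flux_zero, zero_rpow (by linarith : r - 1 ≠ 0)]
    · have hy' : 0 < |y| := abs_pos.2 hy0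
      rw [flux, if_neg hy0, Real.norm_eq_abs, abs_mul, abs_of_pos (hpos _ hy')]
      exact hbound _ hy' hy.le
  · have hφx : ContinuousAt (fun y => φ |y|) x :=
      (hcont.continuousAt (Ioi_mem_nhds (abs_pos.2 hx))).comp continuous_abs.continuousAt
    refine (hφx.mul continuousAt_id).congr ?_
    filter_upwards [isOpen_ne.mem_nhds hx] with y hy
    rw [flux, if_neg hy]; rfl

lemma Phi_eq_integral_flux (t : ℝ) : Phi φ t = ∫ s in (0:ℝ)..t, flux φ s := by
  have hpos : ∀ y, 0 ≤ y → Phi φ y = ∫ s in (0:ℝ)..y, flux φ s := by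
    intro y hy
    rw [Phi, abs_of_nonneg hy]
    refine intervalIntegral.integral_congr fun s hs => ?_
    rw [uIcc_of_le hy] at hs
    rcases hs.1.eq_or_lt with rfl | hs0
    · simp [flux_zero]
    · rw [flux_of_pos hs0, mul_comm]
  rcases le_total 0 t with ht | ht
  · exact hpos t ht
  · rw [← Phi_neg, hpos _ (neg_nonneg.2 ht), intervalIntegral.integral_symm,
      ← neg_zero, ← intervalIntegral.integral_comp_neg]
    simp only [flux_neg, intervalIntegral.integral_neg, neg_neg, neg_zero]

lemma hasDerivAt_Phi (hflux : Continuous (flux φ)) (t : ℝ) :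
    HasDerivAt (Phi φ) (flux φ t) t := by
  rw [show Phi φ = fun t => ∫ s in (0:ℝ)..t, flux φ s from funext Phi_eq_integral_flux]
  exact (hflux.integral_hasStrictDerivAt 0 t).hasDerivAt

lemma Phi_le_rpow (hflux : Continuous (flux φ)) {c δ₀ r : ℝ} (hr : 1 < r)
    (hbound : ∀ t, 0 < t → t ≤ δ₀ → φ t * t ≤ c * t ^ (r - 1))
    {y : ℝ} (hy : 0 ≤ y) (hyδ₀ : y ≤ δ₀) :
    Phi φ y ≤ c * y ^ r / r := by
  have hrpow : IntervalIntegrable (fun s : ℝ => c * s ^ (r - 1)) volume 0 y :=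
    (intervalIntegral.intervalIntegrable_rpow' (by linarith)).const_mul c
  calc Phi φ y = ∫ s in (0:ℝ)..y, flux φ s := Phi_eq_integral_flux y
    _ ≤ ∫ s in (0:ℝ)..y, c * s ^ (r - 1) := by
      refine intervalIntegral.integral_mono_on hy (hflux.intervalIntegrable 0 y) hrpow
        fun s hs => ?_
      rcases hs.1.eq_or_lt with rfl | hs0
      · simp [flux_zero, zero_rpow (by linarith : r - 1 ≠ 0)]
      · exact (flux_of_pos hs0).trans_le (hbound s hs0 (hs.2.trans hyδ₀))
    _ = c * y ^ r / r := by
      rw [intervalIntegral.integral_const_mul, integral_rpow (Or.inl (by linarith)),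
        sub_add_cancel, zero_rpow (by linarith), sub_zero, mul_div_assoc]

end Flux

section KineticEnergy

variable {φ : ℝ → ℝ}

lemma kineticEnergy_zero : kineticEnergy φ 0 = 0 := by
  rw [kineticEnergy, Phi_zero, zero_mul, sub_zero]

lemma kineticEnergy_neg (s : ℝ) : kineticEnergy φ (-s) = kineticEnergy φ s := by
  rw [kineticEnergy, kineticEnergy, flux_neg, Phi_neg, neg_mul_neg]

lemma kineticEnergy_abs (s : ℝ) : kineticEnergy φ |s| = kineticEnergy φ s := by
  rcases abs_choice s with h | h <;> rw [h]
  exact kineticEnergy_neg s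

lemma continuous_kineticEnergy (hflux : Continuous (flux φ)) :
    Continuous (kineticEnergy φ) :=
  (continuous_id.mul hflux).sub
    (continuous_iff_continuousAt.2 fun t => (hasDerivAt_Phi hflux t).continuousAt)

lemma hasDerivAt_kineticEnergy (hflux : Continuous (flux φ)) (hdiff : DifferentiableOn ℝ φ (Ioi 0))
    {s : ℝ} (hs : 0 < s) :
    HasDerivAt (kineticEnergy φ) (s * deriv (fun t => φ t * t) s) s := by
  have hF : HasDerivAt (fun t => φ t * t) (deriv (fun t => φ t * t) s) s :=
    (((hdiff s hs).differentiableAt (Ioi_mem_nhds hs)).mul differentiableAt_id).hasDerivAt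
  have hE : kineticEnergy φ =ᶠ[𝓝 s] fun t => t * (φ t * t) - Phi φ t := by
    filter_upwards [Ioi_mem_nhds hs] with t ht
    rw [kineticEnergy, flux_of_pos ht]
  refine (((hasDerivAt_id s).mul hF).sub (hasDerivAt_Phi hflux s)).congr_of_eventuallyEq hE
    |>.congr_deriv ?_
  rw [flux_of_pos hs, id]
  ring

lemma strictMonoOn_kineticEnergy (hflux : Continuous (flux φ))
    (hdiff : DifferentiableOn ℝ φ (Ioi 0))
    (hmono : ∀ t > 0, 0 < deriv (fun s => φ s * s) t) :
    StrictMonoOn (kineticEnergy φ) (Ici 0) := by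
  refine strictMonoOn_of_deriv_pos (convex_Ici 0)
    (continuous_kineticEnergy hflux).continuousOn fun s hs => ?_
  rw [interior_Ici] at hs
  rw [(hasDerivAt_kineticEnergy hflux hdiff hs).deriv]
  exact mul_pos hs (hmono s hs)

lemma kineticEnergy_pos (hflux : Continuous (flux φ))
    (hdiff : DifferentiableOn ℝ φ (Ioi 0))
    (hmono : ∀ t > 0, 0 < deriv (fun s => φ s * s) t) {s : ℝ} (hs : s ≠ 0) :
    0 < kineticEnergy φ s := by
  rw [← kineticEnergy_abs, ← kineticEnergy_zero (φ := φ)]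
  exact strictMonoOn_kineticEnergy hflux hdiff hmono self_mem_Ici (abs_nonneg s)
    (abs_pos.2 hs)

lemma rpow_le_kineticEnergy (hflux : Continuous (flux φ))
    (hdiff : DifferentiableOn ℝ φ (Ioi 0)) (hpos : ∀ t > 0, 0 < φ t)
    {l : ℝ} (hl : 1 ≤ l) (hφ2 : ∀ t > 0, l - 1 ≤ deriv (fun s => φ s * s) t / φ t)
    {c δ₀ r : ℝ} (hr : 0 < r) (hbound : ∀ t, 0 < t → t ≤ δ₀ → c * t ^ (r - 1) ≤ φ t * t)
    {s : ℝ} (hs : |s| ≤ δ₀) :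
    (l - 1) * c / r * |s| ^ r ≤ kineticEnergy φ s := by
  set G : ℝ → ℝ := fun s => kineticEnergy φ s - (l - 1) * c / r * s ^ r
  have hG' : ∀ t, 0 < t → HasDerivAt G
      (t * deriv (fun s => φ s * s) t - (l - 1) * c / r * (r * t ^ (r - 1))) t :=
    fun t ht => (hasDerivAt_kineticEnergy hflux hdiff ht).sub
      ((hasDerivAt_rpow_const (Or.inl ht.ne')).const_mul _)
  have hG : MonotoneOn G (Icc 0 δ₀) := by
    refine monotoneOn_of_deriv_nonneg (convex_Icc 0 δ₀)
      ((continuous_kineticEnergy hflux).sub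
        (continuous_const.mul (continuous_rpow_const hr.le))).continuousOn
      (fun t ht => ?_) fun t ht => ?_ <;> rw [interior_Icc] at ht
    · exact (hG' t ht.1).differentiableAt.differentiableWithinAt
    · rw [(hG' t ht.1).deriv]
      have hcoef : (l - 1) * c / r * (r * t ^ (r - 1)) = (l - 1) * (c * t ^ (r - 1)) := by
        field_simp
      rw [hcoef, sub_nonneg]
      calc (l - 1) * (c * t ^ (r - 1)) ≤ (l - 1) * (φ t * t) :=
            mul_le_mul_of_nonneg_left (hbound t ht.1 ht.2.le) (by linarith)
        _ = t * ((l - 1) * φ t) := by ring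
        _ ≤ t * deriv (fun s => φ s * s) t :=
            mul_le_mul_of_nonneg_left ((le_div_iff₀ (hpos t ht.1)).1 (hφ2 t ht.1)) ht.1.le
  have h0 : G 0 = 0 := by simp [G, kineticEnergy_zero, zero_rpow hr.ne']
  have := hG (left_mem_Icc.2 ((abs_nonneg s).trans hs)) ⟨abs_nonneg s, hs⟩ (abs_nonneg s)
  rw [h0] at this
  simp only [G, kineticEnergy_abs] at this
  linarith

end KineticEnergy

lemma monotoneOn_sub_mul_exp {u : ℝ → ℝ} {K α a b : ℝ} (hu : ContinuousOn u (Icc a b))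
    (hu' : DifferentiableOn ℝ u (Ioo a b)) (hbound : ∀ t ∈ Ioo a b, deriv u t ≤ K * (α - u t)) :
    MonotoneOn (fun t => (α - u t) * exp (K * t)) (Icc a b) := by
  have hderiv : ∀ t ∈ Ioo a b, HasDerivAt (fun t => (α - u t) * exp (K * t))
      (-deriv u t * exp (K * t) + (α - u t) * (exp (K * t) * (K * 1))) t := fun t ht =>
    ((((hu' t ht).differentiableAt (Ioo_mem_nhds ht.1 ht.2)).hasDerivAt.const_sub α).fun_mul
      ((hasDerivAt_id' t).const_mul K).exp)
  refine monotoneOn_of_deriv_nonneg (convex_Icc a b)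
    ((continuousOn_const.sub hu).mul (by fun_prop)) (fun t ht => ?_) fun t ht => ?_ <;>
    rw [interior_Icc] at ht
  · exact (hderiv t ht).differentiableAt.differentiableWithinAt
  · rw [(hderiv t ht).deriv]
    nlinarith [hbound t ht, exp_pos (K * t)]

lemma le_mul_of_mul_rpow_le {x y C M r : ℝ} (hx : 0 ≤ x) (hy : 0 ≤ y) (hC : 0 < C)
    (hM : 0 ≤ M) (hr : 0 < r) (h : C * x ^ r ≤ M * y ^ r) :
    x ≤ (M / C) ^ r⁻¹ * y := by
  have hMC : 0 ≤ M / C := div_nonneg hM hC.le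
  rw [← rpow_le_rpow_iff hx (by positivity) hr, mul_rpow (by positivity) hy,
    ← rpow_mul hMC, inv_mul_cancel₀ hr.ne', rpow_one, div_mul_eq_mul_div, le_div_iff₀' hC]
  exact h

lemma exists_forall_le_of_tendsto {u : ℝ → ℝ} (hu : Continuous u) {A B : ℝ}
    (htop : Tendsto u atTop (𝓝 A)) (hbot : Tendsto u atBot (𝓝 B)) {t₀ : ℝ}
    (hA : A ≤ u t₀) (hB : B ≤ u t₀) : ∃ tm, ∀ s, u s ≤ u tm := by
  by_cases h : ∀ s, u s ≤ u t₀
  · exact ⟨t₀, h⟩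
  push Not at h
  obtain ⟨t₂, ht₂⟩ := h
  refine hu.exists_forall_ge' t₂ ?_
  rw [cocompact_eq_atBot_atTop]
  exact eventually_sup.2 ⟨hbot.eventually (eventually_le_nhds (by linarith)),
    htop.eventually (eventually_le_nhds (by linarith))⟩

lemma exists_first_eq_of_lt_of_le {u : ℝ → ℝ} {α a b : ℝ} (hab : a ≤ b)
    (hu : ContinuousOn u (Icc a b)) (ha : u a < α) (hb : α ≤ u b) :
    ∃ t₁ ∈ Ioc a b, u t₁ = α ∧ ∀ t ∈ Ico a t₁, u t < α := by
  set S := Icc a b ∩ u ⁻¹' Ici α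
  have hS : sInf S ∈ S := (hu.preimage_isClosed_of_isClosed isClosed_Icc isClosed_Ici).csInf_mem
    ⟨b, right_mem_Icc.2 hab, hb⟩ ⟨a, fun t ht => ht.1.1⟩
  have hbelow : ∀ t ∈ Ico a (sInf S), u t < α := fun t ht =>
    not_le.1 fun h => notMem_of_lt_csInf ht.2 ⟨a, fun t ht => ht.1.1⟩
      ⟨⟨ht.1, ht.2.le.trans hS.1.2⟩, h⟩
  have hat₁ : a < sInf S := hS.1.1.lt_of_ne fun h => (h ▸ ha).not_ge hS.2
  refine ⟨sInf S, ⟨hat₁, hS.1.2⟩, ?_, hbelow⟩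
  obtain ⟨t, ht, hut⟩ := intermediate_value_Icc hat₁.le (hu.mono (Icc_subset_Icc_right hS.1.2))
    ⟨ha.le, hS.2⟩
  rcases ht.2.lt_or_eq with h | rfl
  · exact absurd hut (hbelow t ⟨ht.1, h⟩).ne
  · exact hut

section ZeroEnergy

variable {H W u : ℝ → ℝ} {α r C M δ : ℝ}

lemma lt_of_zero_energy_of_le (hr : 0 < r) (hC : 0 < C) (hM : 0 ≤ M) (hδ : 0 < δ)
    (hHpos : ∀ s ≠ 0, 0 < H s) (hHlow : ∀ s, |s| ≤ δ → C * |s| ^ r ≤ H s)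
    (hWα : W α = 0) (hWup : ∀ x, α - δ < x → x ≤ α → W x ≤ M * (α - x) ^ r)
    (hu : Differentiable ℝ u) (hu' : Continuous (deriv u)) (hE : ∀ t, H (deriv u t) = W (u t))
    {a : ℝ} (ha : u a < α) {b : ℝ} (hab : a ≤ b) : u b < α := by
  by_contra! hb
  obtain ⟨t₁, ⟨hat₁, -⟩, hut₁, hbelow⟩ :=
    exists_first_eq_of_lt_of_le hab hu.continuous.continuousOn ha hb
  have hu't₁ : deriv u t₁ = 0 := by
    by_contra h
    simpa [hE, hut₁, hWα] using hHpos _ h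
  set K := (M / C) ^ r⁻¹
  have hnear : ∀ᶠ t in 𝓝 t₁, |u t - α| < δ ∧ |deriv u t| < δ := by
    filter_upwards [hu.continuous.continuousAt.preimage_mem_nhds (Metric.ball_mem_nhds _ hδ),
      hu'.continuousAt.preimage_mem_nhds (Metric.ball_mem_nhds _ hδ)] with t h₁ h₂
    simpa [Real.dist_eq, hut₁, hu't₁] using And.intro h₁ h₂
  have hleft : ∀ᶠ t in 𝓝[<] t₁, u t < α ∧ deriv u t ≤ K * (α - u t) := by
    filter_upwards [nhdsWithin_le_nhds hnear, Ioo_mem_nhdsLT hat₁] with t ⟨hut, hu't⟩ ht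
    have hlt := hbelow t ⟨ht.1.le, ht.2⟩
    refine ⟨hlt, (le_abs_self _).trans (le_mul_of_mul_rpow_le (abs_nonneg _) (by linarith) hC hM
      hr ?_)⟩
    have hx : α - δ < u t := by linarith [neg_abs_le (u t - α)]
    calc C * |deriv u t| ^ r ≤ H (deriv u t) := hHlow _ hu't.le
      _ = W (u t) := hE t
      _ ≤ M * (α - u t) ^ r := hWup _ hx hlt.le
  obtain ⟨l, hl, hsub⟩ := mem_nhdsLT_iff_exists_Ioo_subset.1 hleft
  have hm : (l + t₁) / 2 ∈ Ioo l t₁ := ⟨by linarith [mem_Iio.1 hl], by linarith [mem_Iio.1 hl]⟩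
  have hmono := monotoneOn_sub_mul_exp (K := K) (α := α) hu.continuous.continuousOn
    hu.differentiableOn fun t ht => (hsub ⟨hm.1.trans ht.1, ht.2⟩).2
  have hgronwall := hmono (left_mem_Icc.2 hm.2.le) (right_mem_Icc.2 hm.2.le) hm.2.le
  simp only [hut₁, sub_self, zero_mul] at hgronwall
  nlinarith [(hsub hm).1, exp_pos (K * ((l + t₁) / 2))]

lemma lt_of_zero_energy (hr : 0 < r) (hC : 0 < C) (hM : 0 ≤ M) (hδ : 0 < δ)
    (hHpos : ∀ s ≠ 0, 0 < H s) (hHeven : ∀ s, H (-s) = H s)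
    (hHlow : ∀ s, |s| ≤ δ → C * |s| ^ r ≤ H s)
    (hWα : W α = 0) (hWup : ∀ x, α - δ < x → x ≤ α → W x ≤ M * (α - x) ^ r)
    (hu : Differentiable ℝ u) (hu' : Continuous (deriv u)) (hE : ∀ t, H (deriv u t) = W (u t))
    {a : ℝ} (ha : u a < α) (t : ℝ) : u t < α := by
  rcases le_total a t with hat | hta
  · exact lt_of_zero_energy_of_le hr hC hM hδ hHpos hHlow hWα hWup hu hu' hE ha hat
  · have hderiv : deriv (fun t => u (-t)) = fun t => -deriv u (-t) :=
      funext (deriv_comp_neg u)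
    have := lt_of_zero_energy_of_le (u := fun t => u (-t)) hr hC hM hδ hHpos hHlow hWα hWup
      (hu.comp differentiable_neg) (hderiv ▸ (hu'.comp continuous_neg).neg)
      (fun t => by rw [hderiv, hHeven, hE]) (a := -a) (by rwa [neg_neg]) (neg_le_neg hta)
    rwa [neg_neg] at this

lemma lt_of_energy_eq (hr : 0 < r) (hC : 0 < C) (hM : 0 ≤ M) (hδ : 0 < δ)
    (hH0 : H 0 = 0) (hHpos : ∀ s ≠ 0, 0 < H s) (hHeven : ∀ s, H (-s) = H s)
    (hHlow : ∀ s, |s| ≤ δ → C * |s| ^ r ≤ H s)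
    (hW : ContinuousAt W α) (hWnonneg : ∀ x, 0 ≤ W x) (hWα : W α = 0)
    (hWup : ∀ x, α - δ < x → x ≤ α → W x ≤ M * (α - x) ^ r)
    (hu : Differentiable ℝ u) (hu' : Continuous (deriv u)) {c : ℝ}
    (hE : ∀ t, H (deriv u t) - W (u t) = c) {β : ℝ} (hβ : β ≤ α)
    (htop : Tendsto u atTop (𝓝 α)) (hbot : Tendsto u atBot (𝓝 β)) {a : ℝ} (ha : u a < α) :
    ∀ t, u t < α := by
  by_contra! ⟨t₀, ht₀⟩
  have hHnonneg : ∀ s, 0 ≤ H s := fun s => by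
    rcases eq_or_ne s 0 with rfl | hs
    exacts [hH0.ge, (hHpos s hs).le]
  have hc_nonneg : 0 ≤ c := by
    have hlim : Tendsto (fun t => -W (u t)) atTop (𝓝 (-W α)) := ((hW.tendsto).comp htop).neg
    rw [hWα, neg_zero] at hlim
    exact le_of_tendsto' hlim fun t => by linarith [hE t, hHnonneg (deriv u t)]
  obtain ⟨tm, htm⟩ := exists_forall_le_of_tendsto hu.continuous htop hbot ht₀ (hβ.trans ht₀)
  have hc_nonpos : c ≤ 0 := by
    have := hE tm
    rw [IsLocalMax.deriv_eq_zero (Eventually.of_forall htm), hH0] at this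
    linarith [hWnonneg (u tm)]
  have hzero : ∀ t, H (deriv u t) = W (u t) := fun t => by linarith [hE t]
  exact (lt_of_zero_energy hr hC hM hδ hHpos hHeven hHlow hWα hWup hu hu' hzero ha t₀).not_ge ht₀

end ZeroEnergy

lemma lt_of_kineticEnergy_sub_eq {φ W u : ℝ → ℝ} {α l c₁ c₂ δ₀ r a δ c : ℝ}
    (hflux : Continuous (flux φ)) (hdiff : DifferentiableOn ℝ φ (Ioi 0))
    (hpos : ∀ t > 0, 0 < φ t) (hmono : ∀ t > 0, 0 < deriv (fun s => φ s * s) t)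
    (hl : 1 < l) (hφ2 : ∀ t > 0, l - 1 ≤ deriv (fun s => φ s * s) t / φ t)
    (hc₁ : 0 < c₁) (hc₂ : 0 ≤ c₂) (hδ₀ : 0 < δ₀) (hr : 1 < r)
    (hlow : ∀ t, 0 < t → t ≤ δ₀ → c₁ * t ^ (r - 1) ≤ φ t * t)
    (hup : ∀ t, 0 < t → t ≤ δ₀ → φ t * t ≤ c₂ * t ^ (r - 1))
    (hW : Continuous W) (hWnonneg : ∀ x, 0 ≤ W x) (hWα : W α = 0) (ha : 0 ≤ a) (hδ : 0 < δ)
    (hWup : ∀ x, α - δ < x → x ≤ α → W x ≤ a * Phi φ (α - x))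
    (hu : Differentiable ℝ u) (hu' : Continuous (deriv u))
    (hE : ∀ t, kineticEnergy φ (deriv u t) - W (u t) = c) (hα : 0 < α)
    (htop : Tendsto u atTop (𝓝 α)) (hbot : Tendsto u atBot (𝓝 (-α))) (hu0 : u 0 = 0) :
    ∀ t, u t < α := by
  have hδ' : 0 < min δ δ₀ := lt_min hδ hδ₀
  refine lt_of_energy_eq (r := r) (C := (l - 1) * c₁ / r) (M := a * c₂ / r) (by linarith)
    (by have := sub_pos.2 hl; positivity) (by have : 0 < r := zero_lt_one.trans hr; positivity) hδ'
    kineticEnergy_zero (fun s => kineticEnergy_pos hflux hdiff hmono) kineticEnergy_neg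
    (fun s hs => rpow_le_kineticEnergy hflux hdiff hpos hl.le hφ2 (by linarith) hlow
      (hs.trans (min_le_right _ _)))
    hW.continuousAt hWnonneg hWα (fun x hx hxα => ?_) hu hu' hE (by linarith) htop hbot
    (by rw [hu0]; exact hα)
  have hxδ : α - x ≤ δ₀ := by linarith [min_le_right δ δ₀]
  calc W x ≤ a * Phi φ (α - x) := hWup x (by linarith [min_le_left δ δ₀]) hxα
    _ ≤ a * (c₂ * (α - x) ^ r / r) :=
      mul_le_mul_of_nonneg_left (Phi_le_rpow hflux hr hup (by linarith) hxδ) ha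
    _ = a * c₂ / r * (α - x) ^ r := by ring

lemma IsClassicalSolution.energy_eq {φ V q : ℝ → ℝ} (hq : IsClassicalSolution φ V q)
    (hq' : Differentiable ℝ (deriv q)) (hV : Differentiable ℝ V) (hflux : Continuous (flux φ))
    (t s : ℝ) :
    kineticEnergy φ (deriv q t) - V (q t) = kineticEnergy φ (deriv q s) - V (q s) := by
  have hderiv : ∀ t, HasDerivAt (fun t => kineticEnergy φ (deriv q t) - V (q t)) 0 t := by
    intro t
    have hq'' := (hq' t).hasDerivAt
    have hflux_q : HasDerivAt (fun s => flux φ (deriv q s)) (deriv V (q t)) t := hq.2 t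
    exact (((hq''.fun_mul hflux_q).fun_sub ((hasDerivAt_Phi hflux _).comp t hq'')).fun_sub
      ((hV (q t)).hasDerivAt.comp t (hq.1 t).hasDerivAt)).congr_deriv (by ring)
  exact is_const_of_deriv_eq_zero (fun t => (hderiv t).differentiableAt)
    (fun t => (hderiv t).deriv) t s

def reflect (u : ℝ → ℝ) : ℝ → ℝ := fun t => -u (-t)

lemma deriv_reflect (u : ℝ → ℝ) (t : ℝ) : deriv (reflect u) t = deriv u (-t) := by
  rw [show reflect u = fun t => -u (-t) from rfl, deriv.fun_neg, deriv_comp_neg, neg_neg]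

lemma isHeteroclinic_reflect {φ V q : ℝ → ℝ} {α : ℝ} (hq : IsHeteroclinic φ V α q)
    (hV : ∀ t, deriv V (-q t) = -deriv V (q t)) : IsHeteroclinic φ V α (reflect q) := by
  obtain ⟨⟨hq₁, hsol⟩, hq₂, hq₂c, hq0, htop, hbot⟩ := hq
  have hderiv : deriv (reflect q) = fun t => deriv q (-t) := funext (deriv_reflect q)
  refine ⟨⟨(hq₁.comp differentiable_neg).neg, fun t => ?_⟩, hderiv ▸ hq₂.comp differentiable_neg,
    hderiv ▸ hq₂c.comp continuous_neg, by simp [reflect, hq0], ?_, ?_⟩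
  · have hVt : deriv V (reflect q t) = deriv V (q (-t)) * -1 := by
      rw [reflect, hV, mul_neg_one]
    rw [hVt, hderiv]
    exact (hsol (-t)).comp t (hasDerivAt_neg t)
  · rw [← neg_neg α]
    exact (hbot.comp tendsto_neg_atTop_atBot).neg
  · exact (htop.comp tendsto_neg_atBot_atTop).neg

lemma IsHeteroclinic.mem_Ioo {φ V q : ℝ → ℝ} {α l c₁ c₂ δ₀ r a₂ a₄ δ : ℝ}
    (hq : IsHeteroclinic φ V α q) (hflux : Continuous (flux φ))
    (hdiff : DifferentiableOn ℝ φ (Ioi 0)) (hpos : ∀ t > 0, 0 < φ t)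
    (hmono : ∀ t > 0, 0 < deriv (fun s => φ s * s) t)
    (hl : 1 < l) (hφ2 : ∀ t > 0, l - 1 ≤ deriv (fun s => φ s * s) t / φ t)
    (hc₁ : 0 < c₁) (hc₂ : 0 ≤ c₂) (hδ₀ : 0 < δ₀) (hr : 1 < r)
    (hlow : ∀ t, 0 < t → t ≤ δ₀ → c₁ * t ^ (r - 1) ≤ φ t * t)
    (hup : ∀ t, 0 < t → t ≤ δ₀ → φ t * t ≤ c₂ * t ^ (r - 1)) (hα : 0 < α)
    (hV : ContDiff ℝ 1 V) (hVnonneg : ∀ x, 0 ≤ V x) (hVα : V α = 0) (hV_negα : V (-α) = 0)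
    (ha₂ : 0 ≤ a₂) (ha₄ : 0 ≤ a₄) (hδ : 0 < δ)
    (hVα_up : ∀ t, α - δ < t → t ≤ α → V t ≤ a₂ * Phi φ |t - α|)
    (hV_negα_up : ∀ t, -α ≤ t → t < -α + δ → V t ≤ a₄ * Phi φ |t + α|) (t : ℝ) :
    q t ∈ Ioo (-α) α := by
  obtain ⟨hsol, hq₂, hq₂c, hq0, htop, hbot⟩ := hq
  have hE := hsol.energy_eq hq₂ (hV.differentiable one_ne_zero) hflux
  have hderiv : deriv (reflect q) = fun t => deriv q (-t) := funext (deriv_reflect q)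
  constructor
  · have hlt := lt_of_kineticEnergy_sub_eq (W := fun x => V (-x)) (u := reflect q)
      (c := kineticEnergy φ (deriv q 0) - V (q 0)) hflux hdiff hpos
      hmono hl hφ2 hc₁ hc₂ hδ₀ hr hlow hup (hV.continuous.comp continuous_neg)
      (fun x => hVnonneg _)
      hV_negα ha₄ hδ (fun x hx hxα => ?_) (hsol.1.comp differentiable_neg).neg
      (hderiv ▸ hq₂c.comp continuous_neg) (fun t => ?_) hα ?_
      (htop.comp tendsto_neg_atBot_atTop).neg (by simp [reflect, hq0]) (-t)
    · simp only [reflect, neg_neg] at hlt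
      linarith
    · simpa [← Phi_abs (α - x), abs_sub_comm, neg_add_eq_sub] using
        hV_negα_up (-x) (by linarith) (by linarith)
    · rw [hderiv]
      simpa [reflect] using hE (-t) 0
    · rw [← neg_neg α]
      exact (hbot.comp tendsto_neg_atTop_atBot).neg
  · refine lt_of_kineticEnergy_sub_eq hflux hdiff hpos hmono hl hφ2 hc₁ hc₂ hδ₀ hr hlow hup
      hV.continuous hVnonneg hVα ha₂ hδ (fun x hx hxα => ?_) hsol.1 hq₂c (fun t => hE t 0) hα
      htop hbot hq0 t
    simpa [← Phi_abs (α - x), abs_sub_comm] using hVα_up x hx hxα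

lemma deriv_neg_of_even_on {V : ℝ → ℝ} {a b x : ℝ} (hV : ∀ t ∈ Ioo a b, V (-t) = V t)
    (hx : x ∈ Ioo a b) : deriv V (-x) = -deriv V x := by
  have hloc : (fun t => V (-t)) =ᶠ[𝓝 x] V := by
    filter_upwards [Ioo_mem_nhds hx.1 hx.2] with t ht using hV t ht
  rw [← neg_neg (deriv V (-x)), ← deriv_comp_neg, hloc.deriv_eq]

lemma even_on_Ioo_of_odd {φ V q : ℝ → ℝ} {α c : ℝ} (hq : Continuous q)
    (hE : ∀ t, kineticEnergy φ (deriv q t) - V (q t) = c)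
    (htop : Tendsto q atTop (𝓝 α)) (hbot : Tendsto q atBot (𝓝 (-α)))
    (hodd : ∀ t, q (-t) = -q t) (x : ℝ) (hx : x ∈ Ioo (-α) α) : V (-x) = V x := by
  have hderiv : ∀ t, deriv q (-t) = deriv q t := fun t => by
    have := deriv_comp_neg q t
    rw [show (fun t => q (-t)) = fun t => -q t from funext hodd, deriv.fun_neg] at this
    linarith
  obtain ⟨t, rfl⟩ := mem_range_of_exists_le_of_exists_ge hq
    ((hbot.eventually (eventually_le_nhds hx.1)).exists)
    ((htop.eventually (eventually_ge_nhds hx.2)).exists)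
  have := hE (-t)
  rw [hderiv, hodd] at this
  linarith [hE t]

theorem statement17_general (φ V : ℝ → ℝ) (l m α : ℝ) (q : ℝ → ℝ)
    (hφC1 : ContDiffOn ℝ 1 φ (Set.Ioi 0))
    (hφpos : ∀ t > 0, 0 < φ t)
    (hφ1 : ∀ t > 0, 0 < deriv (fun s => φ s * s) t)
    (hl : 1 < l)
    (hφ2 : ∀ t > 0, l - 1 ≤ deriv (fun s => φ s * s) t / φ t ∧
      deriv (fun s => φ s * s) t / φ t ≤ m - 1)
    (hφ3 : ∃ c₁ c₂ δ₀ r : ℝ, 0 < c₁ ∧ 0 < c₂ ∧ 0 < δ₀ ∧ 1 < r ∧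
      ∀ t : ℝ, 0 < t → t ≤ δ₀ → c₁ * t ^ (r - 1) ≤ φ t * t ∧ φ t * t ≤ c₂ * t ^ (r - 1))
    (hα : 0 < α)
    (hV1 : ContDiff ℝ 1 V) (hVnn : ∀ t, 0 ≤ V t)
    (hV2 : V α = 0 ∧ V (-α) = 0 ∧ ∀ t, -α < t → t < α → 0 < V t)
    (hV3 : ∃ a₁ a₂ a₃ a₄ δ : ℝ, 0 < a₁ ∧ 0 < a₂ ∧ 0 < a₃ ∧ 0 < a₄ ∧ 0 < δ ∧ δ < α ∧
      (∀ t, α - δ < t → t ≤ α → a₁ * Phi φ |t - α| ≤ V t ∧ V t ≤ a₂ * Phi φ |t - α|) ∧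
      (∀ t, -α ≤ t → t < -α + δ → a₃ * Phi φ |t + α| ≤ V t ∧ V t ≤ a₄ * Phi φ |t + α|))
    (hq : IsHeteroclinic φ V α q)
    (huniq : ∀ u : ℝ → ℝ, IsHeteroclinic φ V α u → u = q) :
    (∀ t, -α < t → t < α → V (-t) = V t) ↔ (∀ t : ℝ, q (-t) = -q t) := by
  obtain ⟨c₁, c₂, δ₀, r, hc₁, hc₂, hδ₀, hr, hφ3⟩ := hφ3
  obtain ⟨_, a₂, _, a₄, δ, -, ha₂, -, ha₄, hδ, -, hVα, hV_negα⟩ := hV3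
  have hflux : Continuous (flux φ) :=
    continuous_flux hφC1.continuousOn hφpos hδ₀ hr fun t h₁ h₂ => (hφ3 t h₁ h₂).2
  constructor
  · intro hVeven
    have hmem := hq.mem_Ioo hflux (hφC1.differentiableOn one_ne_zero) hφpos hφ1 hl
      (fun t ht => (hφ2 t ht).1) hc₁ hc₂.le hδ₀ hr (fun t h₁ h₂ => (hφ3 t h₁ h₂).1)
      (fun t h₁ h₂ => (hφ3 t h₁ h₂).2) hα hV1 hVnn hV2.1 hV2.2.1 ha₂.le ha₄.le hδ
      (fun t h₁ h₂ => (hVα t h₁ h₂).2) (fun t h₁ h₂ => (hV_negα t h₁ h₂).2)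
    have hreflect : reflect q = q := huniq _ <| isHeteroclinic_reflect hq fun t =>
      deriv_neg_of_even_on (fun x hx => hVeven x hx.1 hx.2) (hmem t)
    intro t
    have hq_t := congrFun hreflect (-t)
    simp only [reflect, neg_neg] at hq_t
    exact hq_t.symm
  · intro hodd t h₁ h₂
    obtain ⟨hsol, hq₂, -, -, htop, hbot⟩ := hq
    exact even_on_Ioo_of_odd hsol.1.continuous
      (fun s => hsol.energy_eq hq₂ (hV1.differentiable one_ne_zero) hflux s 0) htop hbot hodd t
      ⟨h₁, h₂⟩

theorem statement17 (φ V : ℝ → ℝ) (l m α : ℝ) (q : ℝ → ℝ)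
    (hφC1 : ContDiffOn ℝ 1 φ (Set.Ioi 0))
    (hφpos : ∀ t > 0, 0 < φ t)
    (hφ1 : ∀ t > 0, 0 < deriv (fun s => φ s * s) t)
    (hl : 1 < l) (hlm : l ≤ m)
    (hφ2 : ∀ t > 0, l - 1 ≤ deriv (fun s => φ s * s) t / φ t ∧
      deriv (fun s => φ s * s) t / φ t ≤ m - 1)
    (hφ3 : ∃ c₁ c₂ δ₀ r : ℝ, 0 < c₁ ∧ 0 < c₂ ∧ 0 < δ₀ ∧ 1 < r ∧
      ∀ t : ℝ, 0 < t → t ≤ δ₀ → c₁ * t ^ (r - 1) ≤ φ t * t ∧ φ t * t ≤ c₂ * t ^ (r - 1))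
    (hα : 0 < α)
    (hV1 : ContDiff ℝ 1 V) (hVnn : ∀ t, 0 ≤ V t)
    (hV2 : V α = 0 ∧ V (-α) = 0 ∧ ∀ t, -α < t → t < α → 0 < V t)
    (hV3 : ∃ a₁ a₂ a₃ a₄ δ : ℝ, 0 < a₁ ∧ 0 < a₂ ∧ 0 < a₃ ∧ 0 < a₄ ∧ 0 < δ ∧ δ < α ∧
      (∀ t, α - δ < t → t ≤ α → a₁ * Phi φ |t - α| ≤ V t ∧ V t ≤ a₂ * Phi φ |t - α|) ∧
      (∀ t, -α ≤ t → t < -α + δ → a₃ * Phi φ |t + α| ≤ V t ∧ V t ≤ a₄ * Phi φ |t + α|))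
    (hV4 : ∃ k₁ k₂ k₃ k₄ k₅ k₆ k₇ k₈ : ℝ, 0 < k₁ ∧ 0 < k₂ ∧ 0 < k₃ ∧ 0 < k₄ ∧
      0 < k₅ ∧ 0 < k₆ ∧ 0 < k₇ ∧ 0 < k₈ ∧
      (∀ t, 0 ≤ t → t ≤ α →
        -(k₃ * t * φ (k₄ * |t - α|) * |t - α|) ≤ deriv V t ∧
        deriv V t ≤ -(k₁ * t * φ (k₂ * |t - α|) * |t - α|)) ∧
      (∀ t, -α ≤ t → t ≤ 0 →
        -(k₇ * t * φ (k₈ * |t + α|) * |t + α|) ≤ deriv V t ∧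
        deriv V t ≤ -(k₅ * t * φ (k₆ * |t + α|) * |t + α|)))
    (hV5 : ∃ ρ > 0, StrictConvexOn ℝ (Set.Ioo (-α - ρ) (-α + ρ)) V ∧
      StrictConvexOn ℝ (Set.Ioo (α - ρ) (α + ρ)) V)
    (hq : IsHeteroclinic φ V α q)
    (huniq : ∀ u : ℝ → ℝ, IsHeteroclinic φ V α u → u = q) :
    (∀ t, -α < t → t < α → V (-t) = V t) ↔ (∀ t : ℝ, q (-t) = -q t) :=
  statement17_general φ V l m α q hφC1 hφpos hφ1 hl hφ2 hφ3 hα hV1 hVnn hV2 hV3 hq huniq
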